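/- arXiv:2003.09035 — 3 statements merged into one kernel-verified Lean document; each statement's English description precedes it below -/
import Mathlib

section
/- Let n ≥ 1, let σ > 0, let A ⊆ ℝⁿ be compact, and let x* ∈ ℝⁿ with x* ∉ A. Let fᵘ : ℝⁿ → ℝ be σ-strongly convex and attain its global minimum at a point x_u* ∈ A, let fᵏ : ℝⁿ → ℝ, and suppose g ∈ ∂fᵏ(x*) with −g ∈ ∂fᵘ(x*). Then there exists a point x_u on the topological boundary ∂A of A such that (1 − θ)x_u + θx* ∉ A for every θ ∈ (0,1), ⟨g, x* − x_u⟩ < 0, and ⟨g, x* − x_u⟩ ≤ −σ‖x* − x_u‖². -/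
open RealInnerProductSpace

lemma statement1_arith (σ c' K' N' : ℝ) (hσ : 0 < σ) (h1 : 0 < c') (h2 : c' ≤ 1)
    (h3 : 0 < N') (h4 : K' ≤ -(σ * N')) :
    c' * K' < 0 ∧ c' * K' ≤ -(σ * (c' ^ 2 * N')) := by
  have hσN : 0 < σ * N' := mul_pos hσ h3
  constructor
  · nlinarith [mul_pos h1 hσN]
  · nlinarith [mul_le_mul_of_nonneg_left h4 h1.le, mul_pos h1 hσN, sq_nonneg c',
      mul_le_mul_of_nonneg_right (mul_le_mul_of_nonneg_left h2 h1.le) hσN.le]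

/-- With `A` compact, `x* ∉ A`, `fᵘ` σ-strongly convex with global
minimizer in `A`, `g ∈ ∂fᵏ(x*)` and `−g ∈ ∂fᵘ(x*)`, there is a boundary point `x_u` of `A`
such that the open segment from `x_u` to `x*` avoids `A`, `⟨g, x* − x_u⟩ < 0`, and
`⟨g, x* − x_u⟩ ≤ −σ‖x* − x_u‖²`. -/
theorem statement1 {n : ℕ} (hn : 1 ≤ n) (σ : ℝ) (hσ : 0 < σ)
    (A : Set (EuclideanSpace ℝ (Fin n))) (hA : IsCompact A)
    (xstar : EuclideanSpace ℝ (Fin n)) (hxstar : xstar ∉ A)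
    (fu fk : EuclideanSpace ℝ (Fin n) → ℝ)
    (hstrong : ∀ x y gx gy : EuclideanSpace ℝ (Fin n),
      (∀ z, fu z ≥ fu x + ⟪gx, z - x⟫) →
      (∀ z, fu z ≥ fu y + ⟪gy, z - y⟫) →
      ⟪gx - gy, x - y⟫ ≥ σ * ‖x - y‖ ^ 2)
    (xustar : EuclideanSpace ℝ (Fin n)) (hxuA : xustar ∈ A)
    (hmin : ∀ z, fu xustar ≤ fu z)
    (g : EuclideanSpace ℝ (Fin n))
    (hgk : ∀ z, fk z ≥ fk xstar + ⟪g, z - xstar⟫)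
    (hgu : ∀ z, fu z ≥ fu xstar + ⟪-g, z - xstar⟫) :
    ∃ xu ∈ frontier A,
      (∀ θ ∈ Set.Ioo (0 : ℝ) 1, (1 - θ) • xu + θ • xstar ∉ A) ∧
      ⟪g, xstar - xu⟫ < 0 ∧
      ⟪g, xstar - xu⟫ ≤ -(σ * ‖xstar - xu‖ ^ 2) := by
  classical
  have hAclosed : IsClosed A := hA.isClosed
  set φ : ℝ → EuclideanSpace ℝ (Fin n) := fun t => (1 - t) • xustar + t • xstar with hφdef
  have hφ0 : φ 0 = xustar := by simp [φ]
  have hφ1 : φ 1 = xstar := by simp [φ]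
  have hφcont : Continuous φ := by
    apply Continuous.add
    · exact (continuous_const.sub continuous_id).smul continuous_const
    · exact continuous_id.smul continuous_const
  set S : Set ℝ := Set.Icc 0 1 ∩ φ ⁻¹' A with hSdef
  have hScompact : IsCompact S := by
    apply isCompact_Icc.of_isClosed_subset
    · exact isClosed_Icc.inter (hAclosed.preimage hφcont)
    · exact Set.inter_subset_left
  have hSne : S.Nonempty := ⟨0, by simp [S, hφ0, hxuA]⟩
  set t₀ : ℝ := sSup S with ht0def
  have ht0S : t₀ ∈ S := hScompact.sSup_mem hSne
  have ht0Icc : t₀ ∈ Set.Icc (0:ℝ) 1 := ht0S.1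
  have ht0A : φ t₀ ∈ A := ht0S.2
  have ht0lt1 : t₀ < 1 := by
    rcases lt_or_eq_of_le ht0Icc.2 with h | h
    · exact h
    · exfalso; apply hxstar; rw [← hφ1, ← h]; exact ht0A
  have hbeyond : ∀ t, t₀ < t → t ≤ 1 → φ t ∉ A := by
    intro t ht ht1 htA
    have : t ∈ S := ⟨⟨le_trans ht0Icc.1 ht.le, ht1⟩, htA⟩
    exact absurd (le_csSup hScompact.bddAbove this) (not_le.mpr ht)
  set xu : EuclideanSpace ℝ (Fin n) := φ t₀ with hxudef
  -- segment property
  have hseg : ∀ θ ∈ Set.Ioo (0:ℝ) 1, (1 - θ) • xu + θ • xstar ∉ A := by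
    intro θ hθ
    have key : (1 - θ) • xu + θ • xstar = φ (t₀ + θ * (1 - t₀)) := by
      simp only [φ, hxudef]
      module
    rw [key]
    apply hbeyond
    · nlinarith [hθ.1, hθ.2, ht0lt1]
    · nlinarith [hθ.1, hθ.2, ht0lt1]
  -- frontier
  have hfront : xu ∈ frontier A := by
    rw [hAclosed.frontier_eq, Set.mem_diff]
    refine ⟨ht0A, fun hint => ?_⟩
    have hnhds : φ ⁻¹' interior A ∈ nhds t₀ :=
      hφcont.continuousAt.preimage_mem_nhds (isOpen_interior.mem_nhds hint)
    rcases Metric.mem_nhds_iff.mp hnhds with ⟨ε, hε, hball⟩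
    set t := min (t₀ + ε / 2) ((t₀ + 1) / 2) with htdef
    have ht1 : t₀ < t := by
      apply lt_min <;> linarith
    have ht2 : t ≤ 1 := by
      apply le_trans (min_le_right _ _); linarith
    have htball : t ∈ Metric.ball t₀ ε := by
      rw [Metric.mem_ball, Real.dist_eq, abs_lt]
      constructor
      · linarith
      · have := min_le_left (t₀ + ε / 2) ((t₀ + 1) / 2); simp only [← htdef] at this; linarith
    exact hbeyond t ht1 ht2 (interior_subset (hball htball))
  -- inequality from strong convexity
  have hzero : ∀ z : EuclideanSpace ℝ (Fin n), fu z ≥ fu xustar + ⟪(0 : EuclideanSpace ℝ (Fin n)), z - xustar⟫ := by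
    intro z; simp [hmin z]
  have hkey := hstrong xstar xustar (-g) 0 hgu hzero
  have hkey' : -⟪g, xstar - xustar⟫ ≥ σ * ‖xstar - xustar‖ ^ 2 := by
    have : ⟪-g - 0, xstar - xustar⟫ = -⟪g, xstar - xustar⟫ := by
      simp [inner_neg_left]
    linarith [hkey.le.trans_eq this]
  have hne : xstar ≠ xustar := fun h => hxstar (h ▸ hxuA)
  have hNpos : 0 < ‖xstar - xustar‖ ^ 2 := by
    have h0 : 0 < ‖xstar - xustar‖ := by
      rw [norm_pos_iff]
      exact sub_ne_zero.mpr hne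
    positivity
  set c : ℝ := 1 - t₀ with hcdef
  have hc0 : 0 < c := by simp [hcdef]; linarith
  have hc1 : c ≤ 1 := by simp [hcdef]; linarith [ht0Icc.1]
  have hdiff : xstar - xu = c • (xstar - xustar) := by
    simp only [hxudef, φ, hcdef]
    module
  have hinner : ⟪g, xstar - xu⟫ = c * ⟪g, xstar - xustar⟫ := by
    rw [hdiff, inner_smul_right]
  have hnorm : ‖xstar - xu‖ ^ 2 = c ^ 2 * ‖xstar - xustar‖ ^ 2 := by
    rw [hdiff, norm_smul, Real.norm_eq_abs, abs_of_pos hc0]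
    ring
  have hKle : ⟪g, xstar - xustar⟫ ≤ -(σ * ‖xstar - xustar‖ ^ 2) := by linarith
  obtain ⟨harith1, harith2⟩ := statement1_arith σ c ⟪g, xstar - xustar⟫ (‖xstar - xustar‖ ^ 2)
    hσ hc0 hc1 hNpos hKle
  refine ⟨xu, hfront, hseg, ?_, ?_⟩
  · rw [hinner]; exact harith1
  · rw [hinner, hnorm]; exact harith2
end

section
/- Let n ≥ 1, let x̄ ∈ ℝⁿ, let ε₀ > 0, let x* ∈ ℝⁿ with ‖x* − x̄‖ > ε₀, suppose g = α(x* − x̄) for some real α < 0, and set z₁ = x̄ + ε₀ (x* − x̄)/‖x* − x̄‖. Then ⟨g, u(x*, z₁)⟩ = −‖g‖, and for every x with ‖x − x̄‖ = ε₀ one has ⟨g, u(x*, z₁)⟩ / ‖x* − z₁‖ ≤ ⟨g, u(x*, x)⟩ / ‖x* − x‖; that is, z₁ minimizes the quantity ⟨g, u(x*, x)⟩/‖x* − x‖ over the sphere of radius ε₀ about x̄. -/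
open RealInnerProductSpace

/-!
Write `v = x* - x̄` and `w = x - x̄`. The quotient `⟪g, u(x*, x)⟫ / ‖x* - x‖` equals
`α * ⟪v, v - w⟫ / ‖v - w‖ ^ 2`, so as `α < 0` it suffices to show
`⟪v, v - w⟫ / ‖v - w‖ ^ 2 ≤ ‖v‖ / (‖v‖ - ε₀)`, the value attained at `z₁`. After clearing
denominators this is Cauchy–Schwarz, `⟪v, w⟫ ≤ ‖v‖ * ε₀`.
-/

section
variable {E : Type*} [NormedAddCommGroup E] [InnerProductSpace ℝ E]

theorem inner_inv_norm_smul_div_norm (g y : E) :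
    ⟪g, ‖y‖⁻¹ • y⟫ / ‖y‖ = ⟪g, y⟫ / ‖y‖ ^ 2 := by
  rw [real_inner_smul_right, inv_mul_eq_div, div_div, sq]

theorem inner_smul_inv_norm_smul_of_neg_of_pos {α c : ℝ} (hα : α < 0) (hc : 0 < c) (v : E) :
    ⟪α • v, ‖c • v‖⁻¹ • (c • v)⟫ = -‖α • v‖ := by
  rcases eq_or_ne v 0 with rfl | hv
  · simp
  have hv' : ‖v‖ ≠ 0 := norm_ne_zero_iff.2 hv
  rw [norm_smul, norm_smul, real_inner_smul_left, real_inner_smul_right, real_inner_smul_right,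
    real_inner_self_eq_norm_sq, Real.norm_of_nonneg hc.le, Real.norm_of_nonpos hα.le]
  field_simp

theorem inner_smul_div_norm_smul_sq {v : E} (hv : v ≠ 0) (α : ℝ) {c : ℝ} (hc : c ≠ 0) :
    ⟪α • v, c • v⟫ / ‖c • v‖ ^ 2 = α / c := by
  have hv' : ‖v‖ ≠ 0 := norm_ne_zero_iff.2 hv
  rw [norm_smul, real_inner_smul_left, real_inner_smul_right, real_inner_self_eq_norm_sq,
    mul_pow, Real.norm_eq_abs, sq_abs]
  field_simp

theorem inner_sub_div_norm_sub_sq_le {v w : E} (h : ‖w‖ < ‖v‖) :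
    ⟪v, v - w⟫ / ‖v - w‖ ^ 2 ≤ ‖v‖ / (‖v‖ - ‖w‖) := by
  have hpos : 0 < ‖v‖ - ‖w‖ := sub_pos.2 h
  have hvw : 0 < ‖v - w‖ := hpos.trans_le (norm_sub_norm_le v w)
  rw [div_le_div_iff₀ (by positivity) hpos, inner_sub_right, real_inner_self_eq_norm_sq,
    norm_sub_sq_real]
  -- the difference of the two sides is `(‖v‖ + ‖w‖) * (‖v‖ * ‖w‖ - ⟪v, w⟫)`
  nlinarith [mul_nonneg (add_nonneg (norm_nonneg v) (norm_nonneg w))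
    (sub_nonneg.2 (real_inner_le_norm v w))]

end

theorem statement9_general {n : ℕ}
    (xbar : EuclideanSpace ℝ (Fin n)) (ε₀ : ℝ) (hε₀ : 0 < ε₀)
    (xstar : EuclideanSpace ℝ (Fin n)) (hxstar : ‖xstar - xbar‖ > ε₀)
    (g : EuclideanSpace ℝ (Fin n)) (α : ℝ) (hα : α < 0)
    (hg : g = α • (xstar - xbar))
    (z₁ : EuclideanSpace ℝ (Fin n))
    (hz₁ : z₁ = xbar + (ε₀ / ‖xstar - xbar‖) • (xstar - xbar)) :
    ⟪g, ‖xstar - z₁‖⁻¹ • (xstar - z₁)⟫ = -‖g‖ ∧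
    ∀ x : EuclideanSpace ℝ (Fin n), ‖x - xbar‖ = ε₀ →
      ⟪g, ‖xstar - z₁‖⁻¹ • (xstar - z₁)⟫ / ‖xstar - z₁‖ ≤
        ⟪g, ‖xstar - x‖⁻¹ • (xstar - x)⟫ / ‖xstar - x‖ := by
  set v := xstar - xbar
  have hd : 0 < ‖v‖ := hε₀.trans hxstar
  have hc : 0 < 1 - ε₀ / ‖v‖ := sub_pos.2 ((div_lt_one hd).2 hxstar)
  have hz : xstar - z₁ = (1 - ε₀ / ‖v‖) • v := by rw [hz₁]; module
  refine ⟨by rw [hz, hg]; exact inner_smul_inv_norm_smul_of_neg_of_pos hα hc v, fun x hx => ?_⟩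
  have hx' : xstar - x = v - (x - xbar) := (sub_sub_sub_cancel_right xstar x xbar).symm
  rw [inner_inv_norm_smul_div_norm, inner_inv_norm_smul_div_norm, hz, hg,
    inner_smul_div_norm_smul_sq (norm_pos_iff.1 hd) α hc.ne', hx', real_inner_smul_left,
    mul_div_assoc]
  calc α / (1 - ε₀ / ‖v‖) = α * (‖v‖ / (‖v‖ - ‖x - xbar‖)) := by
        rw [hx]; field_simp
    _ ≤ _ := mul_le_mul_of_nonpos_left (inner_sub_div_norm_sub_sq_le (by rwa [hx])) hα.le

/-- If `x*` is outside the closed ball, `g = α(x* − x̄)` with `α < 0`, and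
`z₁ = x̄ + ε₀(x* − x̄)/‖x* − x̄‖`, then `⟨g, u(x*, z₁)⟩ = −‖g‖` and `z₁` minimizes
`⟨g, u(x*, x)⟩/‖x* − x‖` over the sphere of radius `ε₀` about `x̄`. -/
theorem statement9 {n : ℕ} (hn : 1 ≤ n)
    (xbar : EuclideanSpace ℝ (Fin n)) (ε₀ : ℝ) (hε₀ : 0 < ε₀)
    (xstar : EuclideanSpace ℝ (Fin n)) (hxstar : ‖xstar - xbar‖ > ε₀)
    (g : EuclideanSpace ℝ (Fin n)) (α : ℝ) (hα : α < 0)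
    (hg : g = α • (xstar - xbar))
    (z₁ : EuclideanSpace ℝ (Fin n))
    (hz₁ : z₁ = xbar + (ε₀ / ‖xstar - xbar‖) • (xstar - xbar)) :
    ⟪g, ‖xstar - z₁‖⁻¹ • (xstar - z₁)⟫ = -‖g‖ ∧
    ∀ x : EuclideanSpace ℝ (Fin n), ‖x - xbar‖ = ε₀ →
      ⟪g, ‖xstar - z₁‖⁻¹ • (xstar - z₁)⟫ / ‖xstar - z₁‖ ≤
        ⟪g, ‖xstar - x‖⁻¹ • (xstar - x)⟫ / ‖xstar - x‖ :=
  statement9_general xbar ε₀ hε₀ xstar hxstar g α hα hg z₁ hz₁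
end

section
/- Let n ≥ 1, let σ > 0, let ε₀ > 0, let x̄ ∈ ℝⁿ, and let x* ∈ ℝⁿ with ‖x* − x̄‖ > ε₀. Let fᵘ : ℝⁿ → ℝ be σ-strongly convex attaining its global minimum at a point x_u* in the closed ball B̄(x̄, ε₀), let fᵏ : ℝⁿ → ℝ, and suppose g ∈ ∂fᵏ(x*) with −g ∈ ∂fᵘ(x*). Then there exists a point x_u ∈ ℝⁿ with: ‖x_u − x̄‖ = ε₀; x_u − x̄ in the linear span of {g, x* − x̄}; ⟨x_u − x̄, x* − x̄⟩ ≥ ε₀² (so the open segment from x_u to x* avoids the ball); and ⟨g, x* − x_u⟩ ≤ −σ‖x* − x_u‖², i.e., ⟨g, u(x*, x_u)⟩/‖x* − x_u‖ ≤ −σ. -/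
/-!
Since `0 ∈ ∂fᵘ(x_u*)` and `-g ∈ ∂fᵘ(x*)`, strong monotonicity of `∂fᵘ` gives
`⟪g, x* - x_u*⟫ ≤ -σ‖x* - x_u*‖²`. Projecting `x_u*` orthogonally onto the plane
`x̄ + span {g, x* - x̄}` keeps it in the ball, keeps `⟪g, x* - ·⟫` (as `g` lies in the plane)
and shrinks `‖x* - ·‖`, so the inequality survives. Moving from the projected point `p`
towards `x*` until the sphere is left for good gives `x_u`: the inequality is preserved because
`x* - x_u` is a multiple `s • (x* - p)` with `0 ≤ s ≤ 1`, and at the exit point the segment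
points outwards, which yields `⟪x_u - x̄, x* - x̄⟫ ≥ ε₀²`.
-/

open RealInnerProductSpace Set

variable {E : Type*} [NormedAddCommGroup E] [InnerProductSpace ℝ E]

theorem exists_mem_Icc_quadratic_eq_sq {A β c r : ℝ} (hA : 0 < A) (hc : c ≤ r ^ 2)
    (hr : r ^ 2 < c + 2 * β + A) :
    ∃ t ∈ Icc (0 : ℝ) 1, c + 2 * t * β + t ^ 2 * A = r ^ 2 ∧ 0 ≤ β + t * A := by
  set s := √(β ^ 2 + A * (r ^ 2 - c))
  have hs_sq : s ^ 2 = β ^ 2 + A * (r ^ 2 - c) := Real.sq_sqrt (by nlinarith [sq_nonneg β])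
  have hβs : β ≤ s := Real.le_sqrt_of_sq_le (by nlinarith)
  have hsA : s ≤ A + β := Real.sqrt_le_iff.mpr ⟨by linarith, by nlinarith⟩
  have hAt : A * ((s - β) / A) = s - β := mul_div_cancel₀ _ hA.ne'
  -- the larger root, where the quadratic is increasing
  refine ⟨(s - β) / A, ⟨div_nonneg (by linarith) hA.le, (div_le_one hA).mpr (by linarith)⟩,
    ?_, by linarith [Real.sqrt_nonneg (β ^ 2 + A * (r ^ 2 - c))]⟩
  refine mul_left_cancel₀ hA.ne' ?_
  linear_combination (β + A * ((s - β) / A) + s) * hAt + hs_sq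

theorem exists_mem_Icc_norm_add_smul_sub_eq {a b : E} {r : ℝ} (ha : ‖a‖ ≤ r) (hb : r < ‖b‖) :
    ∃ t ∈ Icc (0 : ℝ) 1, ‖a + t • (b - a)‖ = r ∧ r ^ 2 ≤ ⟪a + t • (b - a), b⟫ := by
  have hr : 0 ≤ r := (norm_nonneg a).trans ha
  have hA : 0 < ‖b - a‖ ^ 2 := by
    have : b - a ≠ 0 := sub_ne_zero.mpr fun h => by rw [h] at hb; linarith
    positivity
  have hb' : r ^ 2 < ‖a‖ ^ 2 + 2 * ⟪a, b - a⟫ + ‖b - a‖ ^ 2 := by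
    rw [← norm_add_sq_real, add_sub_cancel]
    exact pow_lt_pow_left₀ hb hr two_ne_zero
  obtain ⟨t, ht, heq, hmono⟩ :=
    exists_mem_Icc_quadratic_eq_sq hA (pow_le_pow_left₀ (norm_nonneg a) ha 2) hb'
  have hnorm_sq : ‖a + t • (b - a)‖ ^ 2 = r ^ 2 := by
    rw [norm_add_sq_real, inner_smul_right, norm_smul, mul_pow, Real.norm_eq_abs, sq_abs, ← heq]
    ring
  refine ⟨t, ht, (pow_left_inj₀ (norm_nonneg _) hr two_ne_zero).mp hnorm_sq, ?_⟩
  set y := a + t • (b - a)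
  have hsplit : ⟪y, b⟫ = ‖y‖ ^ 2 + (1 - t) * ⟪y, b - a⟫ := by
    rw [← real_inner_self_eq_norm_sq, ← inner_smul_right, ← inner_add_right]
    congr 1
    module
  have hinner : ⟪y, b - a⟫ = ⟪a, b - a⟫ + t * ‖b - a‖ ^ 2 := by
    rw [inner_add_left, inner_smul_left, real_inner_self_eq_norm_sq, RCLike.conj_to_real]
  rw [hsplit, hnorm_sq, hinner]
  nlinarith [ht.2]

theorem inner_smul_le_neg_mul_norm_sq {g v : E} {σ s : ℝ} (hσ : 0 ≤ σ) (hs : s ∈ Icc (0 : ℝ) 1)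
    (h : ⟪g, v⟫ ≤ -(σ * ‖v‖ ^ 2)) : ⟪g, s • v⟫ ≤ -(σ * ‖s • v‖ ^ 2) := by
  rw [inner_smul_right, norm_smul, mul_pow, Real.norm_eq_abs, sq_abs]
  have : s ^ 2 ≤ s := by nlinarith [hs.1, hs.2]
  nlinarith [mul_le_mul_of_nonneg_left h hs.1, mul_nonneg hσ (sq_nonneg ‖v‖)]

theorem inner_starProjection_le_neg_mul_norm_sq {K : Submodule ℝ E} [K.HasOrthogonalProjection]
    {g u : E} {σ : ℝ} (hσ : 0 ≤ σ) (hg : g ∈ K) (h : ⟪g, u⟫ ≤ -(σ * ‖u‖ ^ 2)) :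
    ⟪g, K.starProjection u⟫ ≤ -(σ * ‖K.starProjection u‖ ^ 2) := by
  rw [← K.inner_starProjection_left_eq_right, K.starProjection_eq_self_iff.mpr hg]
  have := pow_le_pow_left₀ (norm_nonneg _) (K.norm_starProjection_apply_le u) 2
  nlinarith

theorem statement14_general {n : ℕ} (σ : ℝ) (hσ : 0 < σ)
    (ε₀ : ℝ)
    (xbar xstar : EuclideanSpace ℝ (Fin n)) (hxstar : ‖xstar - xbar‖ > ε₀)
    (fu : EuclideanSpace ℝ (Fin n) → ℝ)
    (hstrong : ∀ x y gx gy : EuclideanSpace ℝ (Fin n),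
      (∀ z, fu z ≥ fu x + ⟪gx, z - x⟫) →
      (∀ z, fu z ≥ fu y + ⟪gy, z - y⟫) →
      ⟪gx - gy, x - y⟫ ≥ σ * ‖x - y‖ ^ 2)
    (xustar : EuclideanSpace ℝ (Fin n)) (hxuball : ‖xustar - xbar‖ ≤ ε₀)
    (hmin : ∀ z, fu xustar ≤ fu z)
    (g : EuclideanSpace ℝ (Fin n))
    (hgu : ∀ z, fu z ≥ fu xstar + ⟪-g, z - xstar⟫) :
    ∃ xu : EuclideanSpace ℝ (Fin n),
      ‖xu - xbar‖ = ε₀ ∧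
      xu - xbar ∈ Submodule.span ℝ ({g, xstar - xbar} : Set (EuclideanSpace ℝ (Fin n))) ∧
      ⟪xu - xbar, xstar - xbar⟫ ≥ ε₀ ^ 2 ∧
      ⟪g, xstar - xu⟫ ≤ -(σ * ‖xstar - xu‖ ^ 2) := by
  have hdesc : ⟪g, xstar - xustar⟫ ≤ -(σ * ‖xstar - xustar‖ ^ 2) := by
    have := hstrong xstar xustar (-g) 0 hgu (fun z => by simpa using hmin z)
    rw [sub_zero, inner_neg_left] at this
    linarith
  set V := Submodule.span ℝ ({g, xstar - xbar} : Set (EuclideanSpace ℝ (Fin n)))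
  have hgV : g ∈ V := Submodule.subset_span (by simp)
  have hbV : xstar - xbar ∈ V := Submodule.subset_span (by simp)
  set a := V.starProjection (xustar - xbar)
  have hproj : V.starProjection (xstar - xustar) = (xstar - xbar) - a := by
    rw [← sub_sub_sub_cancel_right xstar xustar xbar, map_sub,
      V.starProjection_eq_self_iff.mpr hbV]
  have hdesc_a : ⟪g, (xstar - xbar) - a⟫ ≤ -(σ * ‖(xstar - xbar) - a‖ ^ 2) :=
    hproj ▸ inner_starProjection_le_neg_mul_norm_sq hσ.le hgV hdesc
  obtain ⟨t, ht, hnorm, hinner⟩ := exists_mem_Icc_norm_add_smul_sub_eq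
    ((V.norm_starProjection_apply_le _).trans hxuball) hxstar
  have hxu : xbar + (a + t • ((xstar - xbar) - a)) - xbar = a + t • ((xstar - xbar) - a) := by
    abel
  have hxstar_xu : xstar - (xbar + (a + t • ((xstar - xbar) - a)))
      = (1 - t) • ((xstar - xbar) - a) := by module
  refine ⟨xbar + (a + t • ((xstar - xbar) - a)), ?_, ?_, ?_, ?_⟩
  · rw [hxu, hnorm]
  · rw [hxu]
    exact V.add_mem (V.starProjection_apply_mem _) (V.smul_mem t (V.sub_mem hbV
      (V.starProjection_apply_mem _)))
  · rwa [hxu]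
  · rw [hxstar_xu]
    exact inner_smul_le_neg_mul_norm_sq hσ.le ⟨by linarith [ht.2], by linarith [ht.1]⟩ hdesc_a

/-- If `fᵘ` is σ-strongly convex with global minimizer in the closed ball
`B̄(x̄, ε₀)`, `x*` is outside the ball, `g ∈ ∂fᵏ(x*)` and `−g ∈ ∂fᵘ(x*)`, then there is a
point `x_u` on the sphere, lying in the plane through `x̄` spanned by `g` and `x* − x̄`,
with `⟨x_u − x̄, x* − x̄⟩ ≥ ε₀²` and `⟨g, x* − x_u⟩ ≤ −σ‖x* − x_u‖²`. -/
theorem statement14 {n : ℕ} (hn : 1 ≤ n) (σ : ℝ) (hσ : 0 < σ)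
    (ε₀ : ℝ) (hε₀ : 0 < ε₀)
    (xbar xstar : EuclideanSpace ℝ (Fin n)) (hxstar : ‖xstar - xbar‖ > ε₀)
    (fu fk : EuclideanSpace ℝ (Fin n) → ℝ)
    (hstrong : ∀ x y gx gy : EuclideanSpace ℝ (Fin n),
      (∀ z, fu z ≥ fu x + ⟪gx, z - x⟫) →
      (∀ z, fu z ≥ fu y + ⟪gy, z - y⟫) →
      ⟪gx - gy, x - y⟫ ≥ σ * ‖x - y‖ ^ 2)
    (xustar : EuclideanSpace ℝ (Fin n)) (hxuball : ‖xustar - xbar‖ ≤ ε₀)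
    (hmin : ∀ z, fu xustar ≤ fu z)
    (g : EuclideanSpace ℝ (Fin n))
    (hgk : ∀ z, fk z ≥ fk xstar + ⟪g, z - xstar⟫)
    (hgu : ∀ z, fu z ≥ fu xstar + ⟪-g, z - xstar⟫) :
    ∃ xu : EuclideanSpace ℝ (Fin n),
      ‖xu - xbar‖ = ε₀ ∧
      xu - xbar ∈ Submodule.span ℝ ({g, xstar - xbar} : Set (EuclideanSpace ℝ (Fin n))) ∧
      ⟪xu - xbar, xstar - xbar⟫ ≥ ε₀ ^ 2 ∧
      ⟪g, xstar - xu⟫ ≤ -(σ * ‖xstar - xu‖ ^ 2) :=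
  statement14_general σ hσ ε₀ xbar xstar hxstar fu hstrong xustar hxuball hmin g hgu
end
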